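/- Let X and Y be infinite compact Hausdorff spaces. Then there exists a sequence (φ_n) of non-negative continuous functions on X × Y with pairwise disjoint supports and ‖φ_n‖_∞ = 1 for every n, a linear isometry T from the Banach space c₀ into the Banach space C(X × Y, ℝ) (with the supremum norm) sending the n-th standard unit vector e_n to φ_n, and a bounded linear map P : C(X × Y, ℝ) → C(X × Y, ℝ) with P ∘ P = P whose range equals the range of T; in particular C(X × Y, ℝ) contains a complemented isometric copy of c₀. -/

import Mathlib

/-- The `n`-th standard unit vector of `c₀`, realized as the space `C₀(ℕ, ℝ)` of
functions on the discrete space `ℕ` vanishing at infinity. -/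
noncomputable def stdUnitVec (n : ℕ) : ZeroAtInftyContinuousMap ℕ ℝ where
  toFun := Pi.single n 1
  continuous_toFun := continuous_of_discreteTopology
  zero_at_infty' := by
    have h : ∀ᶠ m in Filter.cocompact ℕ, (Pi.single n (1 : ℝ) : ℕ → ℝ) m = 0 := by
      rw [Filter.cocompact_eq_cofinite]
      exact (Set.finite_singleton n).eventually_cofinite_notMem.mono fun m hm =>
        Pi.single_eq_of_ne (by simpa using hm) 1
    exact Filter.Tendsto.congr' (h.mono fun m hm => hm.symm) tendsto_const_nhds


namespace Stmt18
open Filter Topology Set Function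

variable {X : Type*} [TopologicalSpace X]

/-- Step: inside an infinite open set, find a nonempty open and a disjoint infinite open. -/
lemma step_ex [T2Space X] {V : Set X} (hV : IsOpen V) (hI : V.Infinite) :
    ∃ p : Set X × Set X, IsOpen p.1 ∧ p.1.Nonempty ∧ IsOpen p.2 ∧ p.2.Infinite ∧
      p.1 ⊆ V ∧ p.2 ⊆ V ∧ Disjoint p.1 p.2 := by
  obtain ⟨x, hx, y, hy, hxy⟩ := hI.nontrivial
  obtain ⟨u, v, hu, hv, hxu, hyv, huv⟩ := t2_separation hxy
  by_cases hA : (u ∩ V).Infinite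
  · exact ⟨(v ∩ V, u ∩ V), hv.inter hV, ⟨y, hyv, hy⟩, hu.inter hV, hA,
      inter_subset_right, inter_subset_right,
      (huv.symm).mono inter_subset_left inter_subset_left⟩
  by_cases hB : (v ∩ V).Infinite
  · exact ⟨(u ∩ V, v ∩ V), hu.inter hV, ⟨x, hxu, hx⟩, hv.inter hV, hB,
      inter_subset_right, inter_subset_right,
      huv.mono inter_subset_left inter_subset_left⟩
  -- both finite: x is isolated
  rw [Set.not_infinite] at hA
  have hxo : IsOpen ({x} : Set X) := by
    have hF : IsClosed ((u ∩ V) \ {x}) := (hA.diff (t := {x})).isClosed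
    have : ({x} : Set X) = (u ∩ V) ∩ ((u ∩ V) \ {x})ᶜ := by
      ext z
      simp only [mem_singleton_iff, mem_inter_iff, mem_compl_iff, mem_diff, not_and, not_not]
      constructor
      · rintro rfl; exact ⟨⟨hxu, hx⟩, fun _ => rfl⟩
      · rintro ⟨hz, h2⟩; exact h2 hz
    rw [this]
    exact (hu.inter hV).inter hF.isOpen_compl
  refine ⟨({x}, V \ {x}), hxo, ⟨x, rfl⟩, hV.sdiff isClosed_singleton, hI.diff (finite_singleton x),
    singleton_subset_iff.2 hx, diff_subset, disjoint_sdiff_right⟩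

/-- An infinite T2 space has a sequence of pairwise disjoint nonempty open sets. -/
lemma exists_disjoint_opens [T2Space X] [Infinite X] :
    ∃ W : ℕ → Set X, (∀ n, IsOpen (W n)) ∧ (∀ n, (W n).Nonempty) ∧
      Pairwise (Disjoint on W) := by
  classical
  let T := {V : Set X // IsOpen V ∧ V.Infinite}
  have pick : ∀ V : T, ∃ p : Set X × Set X, IsOpen p.1 ∧ p.1.Nonempty ∧ IsOpen p.2 ∧
      p.2.Infinite ∧ p.1 ⊆ V.1 ∧ p.2 ⊆ V.1 ∧ Disjoint p.1 p.2 :=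
    fun V => step_ex V.2.1 V.2.2
  let next : T → T := fun V => ⟨(pick V).choose.2, (pick V).choose_spec.2.2.1,
    (pick V).choose_spec.2.2.2.1⟩
  let Wof : T → Set X := fun V => (pick V).choose.1
  let chain : ℕ → T := fun n => next^[n] ⟨univ, isOpen_univ, infinite_univ⟩
  have chain_succ : ∀ n, chain (n + 1) = next (chain n) := fun n =>
    Function.iterate_succ_apply' _ _ _
  refine ⟨fun n => Wof (chain n), fun n => (pick (chain n)).choose_spec.1,
    fun n => (pick (chain n)).choose_spec.2.1, ?_⟩
  -- key subset facts
  have hWsub : ∀ n, Wof (chain n) ⊆ (chain n).1 := fun n =>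
    (pick (chain n)).choose_spec.2.2.2.2.1
  have hVsub : ∀ n, (chain (n+1)).1 ⊆ (chain n).1 := fun n => by
    rw [chain_succ]; exact (pick (chain n)).choose_spec.2.2.2.2.2.1
  have hdis : ∀ n, Disjoint (Wof (chain n)) ((chain (n+1)).1) := fun n => by
    rw [chain_succ]; exact (pick (chain n)).choose_spec.2.2.2.2.2.2
  have hmono : ∀ n m, n ≤ m → (chain m).1 ⊆ (chain n).1 := by
    intro n m h
    induction m, h using Nat.le_induction with
    | base => exact subset_rfl
    | succ m hm ih => exact (hVsub m).trans ih
  have key : ∀ n m, n < m → Disjoint (Wof (chain n)) (Wof (chain m)) := by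
    intro n m h
    exact (hdis n).mono_right ((hWsub m).trans (hmono (n+1) m h))
  intro n m hnm
  rcases lt_or_gt_of_ne hnm with h | h
  · exact key n m h
  · exact (key m n h).symm

/-- bumps on an infinite compact T2 space -/
lemma exists_bumps (X : Type*) [TopologicalSpace X] [CompactSpace X] [T2Space X] [Infinite X] :
    ∃ (x : ℕ → X) (g : ℕ → C(X, ℝ)),
      (∀ n z, g n z ∈ Icc (0:ℝ) 1) ∧ (∀ n, g n (x n) = 1) ∧
      (∀ n m, n ≠ m → g m (x n) = 0) ∧
      (∀ n m, n ≠ m → Disjoint (support ⇑(g n)) (support ⇑(g m))) := by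
  obtain ⟨W, hWo, hWne, hWd⟩ := exists_disjoint_opens (X := X)
  choose x hx using hWne
  have hsep : ∀ n, ∃ f : C(X, ℝ), EqOn (⇑f) 0 (W n)ᶜ ∧ EqOn (⇑f) 1 {x n} ∧
      ∀ z, f z ∈ Icc (0:ℝ) 1 := fun n =>
    exists_continuous_zero_one_of_isClosed (hWo n).isClosed_compl isClosed_singleton
      (disjoint_compl_left_iff.2 (singleton_subset_iff.2 (hx n)))
  choose g hg0 hg1 hgmem using hsep
  have hsupp : ∀ n, support ⇑(g n) ⊆ W n := by
    intro n z hz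
    by_contra hzc
    exact hz (hg0 n hzc)
  have hgx : ∀ n m, n ≠ m → g m (x n) = 0 := by
    intro n m hnm
    apply hg0 m
    intro hmem
    exact (hWd hnm.symm).ne_of_mem hmem (hx n) rfl
  refine ⟨x, g, fun n z => hgmem n z, fun n => hg1 n rfl, hgx, fun n m hnm => ?_⟩
  exact ((hWd hnm).mono (hsupp n) (hsupp m))

/-- evaluation as a continuous linear map on `C(α, ℝ)` for compact `α`. -/
noncomputable def evalCLM {α : Type*} [TopologicalSpace α] [CompactSpace α] (x : α) :
    C(α, ℝ) →L[ℝ] ℝ :=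
  LinearMap.mkContinuous
    { toFun := fun f => f x
      map_add' := fun f g => rfl
      map_smul' := fun c f => rfl } 1
    (fun f => by simpa using f.norm_coe_le_norm x)

@[simp] lemma evalCLM_apply {α : Type*} [TopologicalSpace α] [CompactSpace α] (x : α)
    (f : C(α, ℝ)) : evalCLM x f = f x := rfl

/-- Build an element of c₀ from a sequence tending to 0. -/
noncomputable def mkC0 (c : ℕ → ℝ) (hc : Tendsto c atTop (𝓝 0)) :
    ZeroAtInftyContinuousMap ℕ ℝ where
  toFun := c
  continuous_toFun := continuous_of_discreteTopology
  zero_at_infty' := by rwa [cocompact_eq_atTop]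

@[simp] lemma mkC0_apply (c : ℕ → ℝ) (hc) (n : ℕ) : mkC0 c hc n = c n := rfl

lemma c0_apply_le_norm (a : ZeroAtInftyContinuousMap ℕ ℝ) (n : ℕ) : |a n| ≤ ‖a‖ := by
  rw [← ZeroAtInftyContinuousMap.norm_toBCF_eq_norm]
  exact (a.toBCF.norm_coe_le_norm n).trans_eq' (by simp [Real.norm_eq_abs])

lemma c0_norm_le (a : ZeroAtInftyContinuousMap ℕ ℝ) {C : ℝ} (h0 : 0 ≤ C)
    (h : ∀ n, |a n| ≤ C) : ‖a‖ ≤ C := by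
  rw [← ZeroAtInftyContinuousMap.norm_toBCF_eq_norm]
  exact BoundedContinuousFunction.norm_le h0 |>.2 (fun n => by simpa [Real.norm_eq_abs] using h n)

lemma c0_tendsto (a : ZeroAtInftyContinuousMap ℕ ℝ) : Tendsto (fun n => a n) atTop (𝓝 0) := by
  have := a.zero_at_infty'
  rwa [cocompact_eq_atTop] at this

/-- The fixed ultrafilter extending `atTop` on ℕ. -/
noncomputable def UF : Ultrafilter ℕ := Ultrafilter.of atTop

lemma UF_le : (UF : Filter ℕ) ≤ atTop := Ultrafilter.of_le _

/-- limit along UF -/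
noncomputable def ulim (c : ℕ → ℝ) : ℝ := limUnder (UF : Filter ℕ) c

lemma ulim_eq_of_tendsto {c : ℕ → ℝ} {x : ℝ} (h : Tendsto c (UF : Filter ℕ) (𝓝 x)) :
    ulim c = x := h.limUnder_eq

lemma tendsto_ulim {c : ℕ → ℝ} {C : ℝ} (hC : ∀ n, |c n| ≤ C) :
    Tendsto c (UF : Filter ℕ) (𝓝 (ulim c)) := by
  have hex : ∃ x : ℝ, Tendsto c (UF : Filter ℕ) (𝓝 x) := by
    have hmem0 : ∀ᶠ n in (UF : Filter ℕ), c n ∈ Icc (-C) C :=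
      Filter.Eventually.of_forall (fun n => abs_le.1 (hC n))
    have hmem : Icc (-C) C ∈ Ultrafilter.map c UF :=
      Ultrafilter.mem_map.2 hmem0
    obtain ⟨x, -, hx⟩ := isCompact_Icc.ultrafilter_le_nhds (UF.map c)
      (le_principal_iff.2 hmem)
    exact ⟨x, hx⟩
  exact tendsto_nhds_limUnder hex

lemma ulim_eq_of_eventually_const {c : ℕ → ℝ} {x : ℝ} (h : ∀ᶠ n in atTop, c n = x) :
    ulim c = x :=
  ulim_eq_of_tendsto (Tendsto.congr' (by filter_upwards [UF_le h] with n hn using hn.symm)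
    tendsto_const_nhds)

/-- sign of a boolean -/
def sgn (b : Bool) : ℝ := if b then -1 else 1

lemma sgn_mul_self (b : Bool) : sgn b * sgn b = 1 := by cases b <;> simp [sgn]

lemma sgn_not (b : Bool) : sgn (!b) = - sgn b := by cases b <;> simp [sgn]

lemma abs_sgn (b : Bool) : |sgn b| = 1 := by cases b <;> simp [sgn]

private lemma flip_invol {N : ℕ} (i : Fin N) (s : Fin N → Bool) :
    Function.update (Function.update s i (!(s i))) i (!(Function.update s i (!(s i)) i)) = s := by
  funext k
  by_cases hk : k = i
  · subst hk; simp
  · simp [Function.update_of_ne hk]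

private lemma flip_ne {N : ℕ} (i : Fin N) (s : Fin N → Bool) :
    Function.update s i (!(s i)) ≠ s := by
  intro h
  have := congrFun h i
  rw [Function.update_self] at this
  simp at this

/-- sum of a single sign over the hypercube vanishes -/
lemma sum_sgn {N : ℕ} (i : Fin N) : ∑ s : Fin N → Bool, sgn (s i) = 0 := by
  classical
  refine Finset.sum_involution (fun s _ => Function.update s i (!(s i))) ?_ ?_
    (fun s _ => Finset.mem_univ _) ?_
  · intro s _
    simp only [Function.update_self, sgn_not]; ring
  · intro s _ _
    exact flip_ne i s
  · intro s _
    exact flip_invol i s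

/-- orthogonality of distinct signs -/
lemma sum_sgn_mul {N : ℕ} (i j : Fin N) (hij : i ≠ j) :
    ∑ s : Fin N → Bool, sgn (s i) * sgn (s j) = 0 := by
  classical
  refine Finset.sum_involution (fun s _ => Function.update s i (!(s i))) ?_ ?_
    (fun s _ => Finset.mem_univ _) ?_
  · intro s _
    simp only [Function.update_self, Function.update_of_ne (Ne.symm hij), sgn_not]
    ring
  · intro s _ _
    exact flip_ne i s
  · intro s _
    exact flip_invol i s

/-- Finite-level Bessel inequality. -/
lemma bessel {ι : Type*} [Fintype ι] [Nonempty ι] (F : ι → ℝ) (E : ℕ → ι → ℝ)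
    (k : ℕ)
    (orth : ∀ i ∈ Finset.range k, ∀ j ∈ Finset.range k,
      ∑ s : ι, E i s * E j s = if i = j then (Fintype.card ι : ℝ) else 0) :
    ∑ i ∈ Finset.range k, (∑ s : ι, E i s * F s) ^ 2
      ≤ (Fintype.card ι : ℝ) * ∑ s : ι, F s ^ 2 := by
  classical
  set m : ℝ := (Fintype.card ι : ℝ) with hm
  have hm0 : 0 < m := by
    rw [hm]; exact_mod_cast Fintype.card_pos
  set d : ℕ → ℝ := fun i => ∑ s : ι, E i s * F s with hd
  set B : ι → ℝ := fun s => ∑ i ∈ Finset.range k, d i * E i s with hB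
  have claimA : ∑ s : ι, F s * B s = ∑ i ∈ Finset.range k, d i ^ 2 := by
    calc ∑ s : ι, F s * B s
        = ∑ s : ι, ∑ i ∈ Finset.range k, d i * (E i s * F s) := by
          refine Finset.sum_congr rfl fun s _ => ?_
          rw [hB, Finset.mul_sum]
          exact Finset.sum_congr rfl fun i _ => by ring
      _ = ∑ i ∈ Finset.range k, ∑ s : ι, d i * (E i s * F s) := Finset.sum_comm
      _ = ∑ i ∈ Finset.range k, d i ^ 2 := by
          refine Finset.sum_congr rfl fun i _ => ?_
          rw [← Finset.mul_sum, hd]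
          ring
  have claimB : ∑ s : ι, B s ^ 2 = m * ∑ i ∈ Finset.range k, d i ^ 2 := by
    calc ∑ s : ι, B s ^ 2
        = ∑ s : ι, ∑ i ∈ Finset.range k, ∑ j ∈ Finset.range k,
            (d i * d j) * (E i s * E j s) := by
          refine Finset.sum_congr rfl fun s _ => ?_
          rw [hB, sq, Finset.sum_mul_sum]
          exact Finset.sum_congr rfl fun i _ => Finset.sum_congr rfl fun j _ => by ring
      _ = ∑ i ∈ Finset.range k, ∑ j ∈ Finset.range k,
            (d i * d j) * ∑ s : ι, E i s * E j s := by
          rw [Finset.sum_comm]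
          refine Finset.sum_congr rfl fun i _ => ?_
          rw [Finset.sum_comm]
          exact Finset.sum_congr rfl fun j _ => (Finset.mul_sum _ _ _).symm
      _ = ∑ i ∈ Finset.range k, (d i * d i) * m := by
          refine Finset.sum_congr rfl fun i hi => ?_
          have hterm : ∀ j ∈ Finset.range k, (d i * d j) * (∑ s : ι, E i s * E j s)
              = if i = j then (d i * d i) * m else 0 := by
            intro j hj
            rw [orth i hi j hj]
            by_cases h : i = j
            · subst h; simp
            · simp [h]
          rw [Finset.sum_congr rfl hterm, Finset.sum_ite_eq (Finset.range k) i
            (fun _ => (d i * d i) * m), if_pos hi]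
      _ = m * ∑ i ∈ Finset.range k, d i ^ 2 := by
          rw [Finset.mul_sum]
          exact Finset.sum_congr rfl fun i _ => by ring
  have key : (0:ℝ) ≤ ∑ s : ι, (m * F s - B s) ^ 2 :=
    Finset.sum_nonneg (fun s _ => sq_nonneg _)
  have expand : ∑ s : ι, (m * F s - B s) ^ 2
      = m ^ 2 * ∑ s : ι, F s ^ 2 - m * ∑ i ∈ Finset.range k, d i ^ 2 := by
    have e1 : ∀ s : ι, (m * F s - B s) ^ 2
        = m ^ 2 * F s ^ 2 - 2 * m * (F s * B s) + B s ^ 2 := fun s => by ring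
    rw [Finset.sum_congr rfl (fun s _ => e1 s), Finset.sum_add_distrib,
      Finset.sum_sub_distrib, ← Finset.mul_sum, ← Finset.mul_sum, claimA, claimB]
    ring
  rw [expand] at key
  have h2 : m * ∑ i ∈ Finset.range k, d i ^ 2 ≤ m * (m * ∑ s : ι, F s ^ 2) := by
    nlinarith [key]
  exact (mul_le_mul_iff_right₀ hm0).1 h2

variable {Y : Type*} [TopologicalSpace Y]

/-- derived set of a space -/
def derivSet (Y : Type*) [TopologicalSpace Y] : Set Y := {y | AccPt y (𝓟 (univ : Set Y))}

/-- every infinite subset of a compact space has an accumulation point -/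
lemma exists_accPt [CompactSpace Y] {S : Set Y} (hS : S.Infinite) :
    ∃ w, AccPt w (𝓟 S) := by
  by_contra hcon
  push_neg at hcon
  have h : ∀ w : Y, ∃ U, IsOpen U ∧ w ∈ U ∧ ∀ y, y ∈ U ∩ S → y = w := by
    intro w
    have := hcon w
    rw [accPt_iff_nhds] at this
    push_neg at this
    obtain ⟨U, hU, hU2⟩ := this
    obtain ⟨V, hVU, hVo, hwV⟩ := mem_nhds_iff.1 hU
    exact ⟨V, hVo, hwV, fun y hy => hU2 y ⟨hVU hy.1, hy.2⟩⟩
  choose U hUo hUm hUs using h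
  obtain ⟨t, ht⟩ := isCompact_univ.elim_finite_subcover U hUo
    (fun w _ => mem_iUnion.2 ⟨w, hUm w⟩)
  have : S ⊆ ↑t := by
    intro z hz
    obtain ⟨w, hw, hzw⟩ := mem_iUnion₂.1 (ht (mem_univ z))
    have : z = w := hUs w z ⟨hzw, hz⟩
    rwa [this]
  exact hS (Finite.subset t.finite_toSet this)

lemma accPt_mem_closure {w : Y} {S : Set Y} (h : AccPt w (𝓟 S)) : w ∈ closure S := by
  rw [mem_closure_iff_clusterPt]
  exact AccPt.clusterPt h

/-- in a T1 space, every neighborhood of an accumulation point of the whole space is infinite -/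
lemma infinite_nhds [T1Space Y] {x : Y} (hx : x ∈ derivSet Y) {U : Set Y} (hU : U ∈ 𝓝 x) :
    U.Infinite := by
  intro hfin
  have hF : IsClosed (U \ {x}) := (hfin.diff (t := {x})).isClosed
  have hU2 : U ∩ (U \ {x})ᶜ ∈ 𝓝 x :=
    inter_mem hU (hF.isOpen_compl.mem_nhds (by simp))
  have hacc : AccPt x (𝓟 (univ : Set Y)) := hx
  rw [accPt_iff_nhds] at hacc
  obtain ⟨y, ⟨hy1, -⟩, hy2⟩ := hacc _ hU2
  exact hy2 (by_contra fun h => ((mem_compl_iff _ _).1 hy1.2) ⟨hy1.1, h⟩)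

/-- If the derived set has a relatively isolated point, there is a nontrivial convergent
sequence. -/
lemma exists_convergent_seq [CompactSpace Y] [T2Space Y]
    {x : Y} (hxD : x ∈ derivSet Y) {W0 : Set Y} (hW0 : W0 ∈ 𝓝 x)
    (hWD : ∀ y, y ∈ W0 ∩ derivSet Y → y = x) :
    ∃ z : ℕ → Y, (∀ k, z k ≠ x) ∧ Tendsto z atTop (𝓝 x) := by
  obtain ⟨t, htm, htc, hts⟩ := exists_mem_nhds_isClosed_subset hW0
  set V : Set Y := interior t with hV
  have hVm : V ∈ 𝓝 x := interior_mem_nhds.2 htm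
  have hVinf : (V \ {x}).Infinite := (infinite_nhds hxD hVm).diff (finite_singleton x)
  set e := hVinf.natEmbedding with he
  set z : ℕ → Y := fun k => (e k : Y) with hz
  have hzV : ∀ k, z k ∈ V \ {x} := fun k => (e k).2
  have hznx : ∀ k, z k ≠ x := fun k => by
    have := (hzV k).2; simpa using this
  refine ⟨z, hznx, ?_⟩
  rw [tendsto_nhds]
  intro O hOo hxO
  by_contra hev
  have hfreq : ∃ᶠ k in atTop, z k ∉ O := not_eventually.1 hev
  have hIinf : {k | z k ∉ O}.Infinite := Nat.frequently_atTop_iff_infinite.1 hfreq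
  have hzinj : Function.Injective z := fun a b hab => e.injective (Subtype.ext hab)
  have hSinf : (z '' {k | z k ∉ O}).Infinite := hIinf.image (hzinj.injOn)
  obtain ⟨w, hw⟩ := exists_accPt hSinf
  have hwD : w ∈ derivSet Y := AccPt.mono hw (principal_mono.2 (subset_univ _))
  have hwcl : w ∈ closure (z '' {k | z k ∉ O}) := accPt_mem_closure hw
  have himsub : z '' {k | z k ∉ O} ⊆ t ∩ Oᶜ := by
    rintro - ⟨k, hk, rfl⟩
    exact ⟨interior_subset (hzV k).1, hk⟩
  have hwt : w ∈ t ∩ Oᶜ := by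
    have : closure (z '' {k | z k ∉ O}) ⊆ t ∩ Oᶜ :=
      closure_minimal himsub (htc.inter (isClosed_compl_iff.2 hOo))
    exact this hwcl
  have : w = x := hWD w ⟨hts hwt.1, hwD⟩
  rw [this] at hwt
  exact hwt.2 hxO

variable {Y : Type*} [TopologicalSpace Y] [CompactSpace Y] [T2Space Y]

structure SchD (Y : Type*) [TopologicalSpace Y] where
  V : Set Y
  isOpen : IsOpen V
  ne : (V ∩ derivSet Y).Nonempty

lemma split_ex (hB : ∀ y ∈ derivSet Y, AccPt y (𝓟 (derivSet Y))) (d : SchD Y) :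
    ∃ p : SchD Y × SchD Y, closure p.1.V ⊆ d.V ∧ closure p.2.V ⊆ d.V ∧
      Disjoint (closure p.1.V) (closure p.2.V) := by
  obtain ⟨x, hxV, hxD⟩ := d.ne
  have hacc := hB x hxD
  rw [accPt_iff_nhds] at hacc
  obtain ⟨y, ⟨hyV, hyD⟩, hyx⟩ := hacc d.V (d.isOpen.mem_nhds hxV)
  obtain ⟨u, v, hu, hv, hyu, hxv, huv⟩ := t2_separation hyx
  obtain ⟨t1, ht1m, ht1c, ht1s⟩ := exists_mem_nhds_isClosed_subset
    (inter_mem (hv.mem_nhds hxv) (d.isOpen.mem_nhds hxV))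
  obtain ⟨t2, ht2m, ht2c, ht2s⟩ := exists_mem_nhds_isClosed_subset
    (inter_mem (hu.mem_nhds hyu) (d.isOpen.mem_nhds hyV))
  refine ⟨(⟨interior t1, isOpen_interior, ⟨x, mem_interior_iff_mem_nhds.2 ht1m, hxD⟩⟩,
          ⟨interior t2, isOpen_interior, ⟨y, mem_interior_iff_mem_nhds.2 ht2m, hyD⟩⟩),
    ?_, ?_, ?_⟩
  · exact (closure_minimal interior_subset ht1c).trans (ht1s.trans inter_subset_right)
  · exact (closure_minimal interior_subset ht2c).trans (ht2s.trans inter_subset_right)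
  · refine Disjoint.mono ?_ ?_ huv.symm
    · exact (closure_minimal interior_subset ht1c).trans (ht1s.trans inter_subset_left)
    · exact (closure_minimal interior_subset ht2c).trans (ht2s.trans inter_subset_left)

variable (hB : ∀ y ∈ derivSet Y, AccPt y (𝓟 (derivSet Y))) (hD : (derivSet Y).Nonempty)

noncomputable def splitD (d : SchD Y) : SchD Y × SchD Y := (split_ex hB d).choose

lemma splitD_sub1 (d : SchD Y) : closure (splitD hB d).1.V ⊆ d.V := (split_ex hB d).choose_spec.1
lemma splitD_sub2 (d : SchD Y) : closure (splitD hB d).2.V ⊆ d.V := (split_ex hB d).choose_spec.2.1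
lemma splitD_disj (d : SchD Y) :
    Disjoint (closure (splitD hB d).1.V) (closure (splitD hB d).2.V) :=
  (split_ex hB d).choose_spec.2.2

noncomputable def scheme : ℕ → (ℕ → Bool) → SchD Y
  | 0, _ => ⟨univ, isOpen_univ, by simpa using hD⟩
  | (N+1), s =>
    if s N then (splitD hB (scheme N s)).2 else (splitD hB (scheme N s)).1

lemma scheme_succ (N : ℕ) (s : ℕ → Bool) :
    scheme hB hD (N+1) s = if s N then (splitD hB (scheme hB hD N s)).2
      else (splitD hB (scheme hB hD N s)).1 := rfl

/-- the closed sets of the scheme -/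
noncomputable def CS (N : ℕ) (s : ℕ → Bool) : Set Y := closure (scheme hB hD N s).V

lemma CS_closed (N s) : IsClosed (CS hB hD N s) := isClosed_closure

lemma CS_nonempty (N s) : (CS hB hD N s).Nonempty := by
  obtain ⟨x, hx, -⟩ := (scheme hB hD N s).ne
  exact ⟨x, subset_closure hx⟩

lemma scheme_congr : ∀ (N : ℕ) (s t : ℕ → Bool), (∀ i, i < N → s i = t i) →
    scheme hB hD N s = scheme hB hD N t
  | 0, s, t, _ => rfl
  | (N+1), s, t, h => by
    have hst : scheme hB hD N s = scheme hB hD N t :=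
      scheme_congr N s t (fun i hi => h i (Nat.lt_succ_of_lt hi))
    rw [scheme_succ, scheme_succ, h N (Nat.lt_succ_self N), hst]

lemma CS_succ_sub (N : ℕ) (s : ℕ → Bool) : CS hB hD (N+1) s ⊆ CS hB hD N s := by
  have h1 : CS hB hD (N+1) s ⊆ (scheme hB hD N s).V := by
    unfold CS
    rw [scheme_succ]
    cases hsN : s N
    · rw [if_neg (by simp)]
      exact splitD_sub1 hB _
    · rw [if_pos rfl]
      exact splitD_sub2 hB _
  exact h1.trans subset_closure

lemma CS_mono {M N : ℕ} (h : M ≤ N) (s : ℕ → Bool) : CS hB hD N s ⊆ CS hB hD M s := by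
  induction N, h using Nat.le_induction with
  | base => exact subset_rfl
  | succ N hMN ih => exact (CS_succ_sub hB hD N s).trans ih

lemma CS_disj : ∀ (N : ℕ) (s t : ℕ → Bool), (∃ i, i < N ∧ s i ≠ t i) →
    Disjoint (CS hB hD N s) (CS hB hD N t) := by
  intro N
  induction N with
  | zero => rintro s t ⟨i, hi, -⟩; exact absurd hi (Nat.not_lt_zero i)
  | succ M ih =>
    rintro s t ⟨i, hi, hne⟩
    by_cases hex : ∃ j, j < M ∧ s j ≠ t j
    · exact (ih s t hex).mono (CS_succ_sub hB hD M s) (CS_succ_sub hB hD M t)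
    push_neg at hex
    have hiN : i = M := by
      rcases Nat.lt_succ_iff_lt_or_eq.1 hi with h | h
      · exact absurd (hex i h) hne
      · exact h
    rw [hiN] at hne
    have hst : scheme hB hD M s = scheme hB hD M t := scheme_congr hB hD M s t hex
    have hs' : CS hB hD (M+1) s = closure ((if s M then (splitD hB (scheme hB hD M s)).2
      else (splitD hB (scheme hB hD M s)).1).V) := by rw [CS, scheme_succ]
    have ht' : CS hB hD (M+1) t = closure ((if t M then (splitD hB (scheme hB hD M s)).2
      else (splitD hB (scheme hB hD M s)).1).V) := by rw [CS, scheme_succ, hst]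
    rw [hs', ht']
    cases hsN : s M
    · have htN : t M = true := by
        cases htN : t M
        · exact absurd (hsN.trans htN.symm) hne
        · rfl
      rw [if_neg (by simp), if_pos htN]
      exact splitD_disj hB _
    · have htN : t M = false := by
        cases htN : t M
        · rfl
        · exact absurd (hsN.trans htN.symm) hne
      rw [if_pos rfl, if_neg (by simp [htN])]
      exact (splitD_disj hB _).symm

/-- extension of a finite boolean string by `false` -/
def extb {N : ℕ} (s : Fin N → Bool) : ℕ → Bool := fun i => if h : i < N then s ⟨i, h⟩ else false

/-- chosen points of the scheme -/
noncomputable def ptS (N : ℕ) (s : Fin N → Bool) : Y :=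
  (CS_nonempty hB hD N (extb s)).choose

lemma ptS_mem (N : ℕ) (s : Fin N → Bool) : ptS hB hD N s ∈ CS hB hD N (extb s) :=
  (CS_nonempty hB hD N (extb s)).choose_spec

/-- the two "sides" at level n -/
noncomputable def sideS (n : ℕ) (b : Bool) : Set Y :=
  ⋃ (s : {s : Fin (n+1) → Bool // s ⟨n, Nat.lt_succ_self n⟩ = b}), CS hB hD (n+1) (extb s.1)

lemma sideS_closed (n : ℕ) (b : Bool) : IsClosed (sideS hB hD n b) :=
  isClosed_iUnion_of_finite (fun s => CS_closed hB hD (n+1) (extb s.1))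

lemma sideS_disj (n : ℕ) : Disjoint (sideS hB hD n false) (sideS hB hD n true) := by
  unfold sideS
  rw [Set.disjoint_iUnion_left]
  intro s
  rw [Set.disjoint_iUnion_right]
  intro t
  apply CS_disj
  refine ⟨n, Nat.lt_succ_self n, ?_⟩
  simp only [extb, dif_pos (Nat.lt_succ_self n)]
  rw [s.2, t.2]
  simp

/-- membership of scheme points in sides -/
lemma ptS_mem_side {n N : ℕ} (hn : n < N) (s : Fin N → Bool) :
    ptS hB hD N s ∈ sideS hB hD n (s ⟨n, hn⟩) := by
  have h1 : ptS hB hD N s ∈ CS hB hD (n+1) (extb s) :=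
    CS_mono hB hD (Nat.succ_le_of_lt hn) (extb s) (ptS_mem hB hD N s)
  set tr : Fin (n+1) → Bool := fun i => s ⟨i.1, lt_of_lt_of_le i.2 (Nat.succ_le_of_lt hn)⟩
    with htr
  have h2 : CS hB hD (n+1) (extb s) = CS hB hD (n+1) (extb tr) := by
    unfold CS
    rw [scheme_congr hB hD (n+1) (extb s) (extb tr) ?_]
    intro i hi
    simp only [extb, htr, dif_pos hi, dif_pos (lt_of_lt_of_le hi (Nat.succ_le_of_lt hn))]
  rw [h2] at h1
  have h3 : tr ⟨n, Nat.lt_succ_self n⟩ = s ⟨n, hn⟩ := rfl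
  exact Set.mem_iUnion.2 ⟨⟨tr, h3⟩, h1⟩

lemma exists_hfun (n : ℕ) : ∃ hf : C(Y, ℝ), EqOn ⇑hf 0 (sideS hB hD n true) ∧
    EqOn ⇑hf 1 (sideS hB hD n false) ∧ ∀ y, hf y ∈ Icc (0:ℝ) 1 :=
  exists_continuous_zero_one_of_isClosed (sideS_closed hB hD n true)
    (sideS_closed hB hD n false) (sideS_disj hB hD n).symm

noncomputable def hfun (n : ℕ) : C(Y, ℝ) := (exists_hfun hB hD n).choose

lemma hfun_mem (n : ℕ) (y : Y) : hfun hB hD n y ∈ Icc (0:ℝ) 1 :=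
  (exists_hfun hB hD n).choose_spec.2.2 y

lemma hfun_val {n N : ℕ} (hn : n < N) (s : Fin N → Bool) :
    hfun hB hD n (ptS hB hD N s) = if s ⟨n, hn⟩ then 0 else 1 := by
  have hmem := ptS_mem_side hB hD hn s
  cases hb : s ⟨n, hn⟩
  · rw [hb] at hmem
    have := (exists_hfun hB hD n).choose_spec.2.1 hmem
    simpa [hfun] using this
  · rw [hb] at hmem
    have := (exists_hfun hB hD n).choose_spec.1 hmem
    simpa [hfun] using this

/-- cardinality of the level-N cube, as a real -/
noncomputable def mcard (N : ℕ) : ℝ := (Fintype.card (Fin N → Bool) : ℝ)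

lemma mcard_pos (N : ℕ) : 0 < mcard N := by
  unfold mcard; exact_mod_cast Fintype.card_pos

/-- level-N Rademacher-type functional -/
noncomputable def Lam (n N : ℕ) (f : C(Y, ℝ)) : ℝ :=
  if h : n < N then (mcard N)⁻¹ * ∑ s : Fin N → Bool, sgn (s ⟨n, h⟩) * f (ptS hB hD N s)
  else 0

lemma Lam_abs_le (n N : ℕ) (f : C(Y, ℝ)) : |Lam hB hD n N f| ≤ ‖f‖ := by
  unfold Lam
  by_cases h : n < N
  · rw [dif_pos h]
    have h1 : |∑ s : Fin N → Bool, sgn (s ⟨n, h⟩) * f (ptS hB hD N s)|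
        ≤ ∑ s : Fin N → Bool, |sgn (s ⟨n, h⟩) * f (ptS hB hD N s)| :=
      Finset.abs_sum_le_sum_abs _ _
    have h2 : ∑ s : Fin N → Bool, |sgn (s ⟨n, h⟩) * f (ptS hB hD N s)|
        ≤ ∑ _s : Fin N → Bool, ‖f‖ := by
      refine Finset.sum_le_sum fun s _ => ?_
      rw [abs_mul, abs_sgn, one_mul]
      rw [← Real.norm_eq_abs]
      exact f.norm_coe_le_norm _
    have h3 : (∑ _s : Fin N → Bool, ‖f‖) = mcard N * ‖f‖ := by
      rw [Finset.sum_const, nsmul_eq_mul]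
      rfl
    rw [abs_mul, abs_of_nonneg (inv_nonneg.2 (mcard_pos N).le)]
    calc (mcard N)⁻¹ * |∑ s : Fin N → Bool, sgn (s ⟨n, h⟩) * f (ptS hB hD N s)|
        ≤ (mcard N)⁻¹ * (mcard N * ‖f‖) := by
          refine mul_le_mul_of_nonneg_left ?_ (inv_nonneg.2 (mcard_pos N).le)
          exact h1.trans (h2.trans_eq h3)
      _ = ‖f‖ := by
          rw [← mul_assoc, inv_mul_cancel₀ (mcard_pos N).ne', one_mul]
  · rw [dif_neg h]
    simpa using norm_nonneg f

lemma Lam_add (n N : ℕ) (f g : C(Y, ℝ)) :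
    Lam hB hD n N (f + g) = Lam hB hD n N f + Lam hB hD n N g := by
  unfold Lam
  by_cases h : n < N
  · rw [dif_pos h, dif_pos h, dif_pos h, ← mul_add, ← Finset.sum_add_distrib]
    congr 1
    refine Finset.sum_congr rfl fun s _ => ?_
    have : (f + g) (ptS hB hD N s) = f (ptS hB hD N s) + g (ptS hB hD N s) := rfl
    rw [this]; ring
  · rw [dif_neg h, dif_neg h, dif_neg h]; ring

lemma Lam_smul (n N : ℕ) (r : ℝ) (f : C(Y, ℝ)) :
    Lam hB hD n N (r • f) = r * Lam hB hD n N f := by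
  unfold Lam
  by_cases h : n < N
  · rw [dif_pos h, dif_pos h]
    have hterm : ∀ s : Fin N → Bool, sgn (s ⟨n, h⟩) * (r • f) (ptS hB hD N s)
        = r * (sgn (s ⟨n, h⟩) * f (ptS hB hD N s)) := by
      intro s
      have : (r • f) (ptS hB hD N s) = r * f (ptS hB hD N s) := rfl
      rw [this]; ring
    rw [Finset.sum_congr rfl (fun s _ => hterm s), ← Finset.mul_sum]
    ring
  · rw [dif_neg h, dif_neg h]; ring

/-- the Y-side functionals in the perfect case -/
noncomputable def nuB (n : ℕ) : C(Y, ℝ) →L[ℝ] ℝ :=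
  LinearMap.mkContinuous
    { toFun := fun f => 2 * ulim (fun N => Lam hB hD n N f)
      map_add' := fun f g => by
        show 2 * ulim (fun N => Lam hB hD n N (f + g))
          = 2 * ulim (fun N => Lam hB hD n N f) + 2 * ulim (fun N => Lam hB hD n N g)
        have hf := tendsto_ulim (fun N => Lam_abs_le hB hD n N f)
        have hg := tendsto_ulim (fun N => Lam_abs_le hB hD n N g)
        have hfg : Tendsto (fun N => Lam hB hD n N (f + g)) (UF : Filter ℕ)
            (𝓝 (ulim (fun N => Lam hB hD n N f) + ulim (fun N => Lam hB hD n N g))) :=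
          Tendsto.congr (fun N => (Lam_add hB hD n N f g).symm) (hf.add hg)
        rw [ulim_eq_of_tendsto hfg]; ring
      map_smul' := fun r f => by
        show 2 * ulim (fun N => Lam hB hD n N (r • f))
          = r • (2 * ulim (fun N => Lam hB hD n N f))
        rw [smul_eq_mul]
        have hf := tendsto_ulim (fun N => Lam_abs_le hB hD n N f)
        have hrf : Tendsto (fun N => Lam hB hD n N (r • f)) (UF : Filter ℕ)
            (𝓝 (r * ulim (fun N => Lam hB hD n N f))) :=
          Tendsto.congr (fun N => (Lam_smul hB hD n N r f).symm) (hf.const_mul r)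
        rw [ulim_eq_of_tendsto hrf]
        ring } 2
    (fun f => by
      have habs : |ulim (fun N => Lam hB hD n N f)| ≤ ‖f‖ := by
        refine le_of_tendsto (tendsto_ulim (fun N => Lam_abs_le hB hD n N f)).abs ?_
        exact Eventually.of_forall (fun N => Lam_abs_le hB hD n N f)
      show ‖2 * ulim (fun N => Lam hB hD n N f)‖ ≤ 2 * ‖f‖
      rw [Real.norm_eq_abs, abs_mul]
      calc |(2:ℝ)| * |ulim (fun N => Lam hB hD n N f)| = 2 * |ulim (fun N => Lam hB hD n N f)| := by
            norm_num
        _ ≤ 2 * ‖f‖ := by linarith)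

lemma nuB_apply (n : ℕ) (f : C(Y, ℝ)) :
    nuB hB hD n f = 2 * ulim (fun N => Lam hB hD n N f) := rfl

lemma nuB_abs_le (n : ℕ) (f : C(Y, ℝ)) : |nuB hB hD n f| ≤ 2 * ‖f‖ := by
  have habs : |ulim (fun N => Lam hB hD n N f)| ≤ ‖f‖ := by
    refine le_of_tendsto (tendsto_ulim (fun N => Lam_abs_le hB hD n N f)).abs ?_
    exact Eventually.of_forall (fun N => Lam_abs_le hB hD n N f)
  rw [nuB_apply, abs_mul]
  calc |(2:ℝ)| * |ulim (fun N => Lam hB hD n N f)| = 2 * |ulim (fun N => Lam hB hD n N f)| := by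
        norm_num
    _ ≤ 2 * ‖f‖ := by linarith

lemma nuB_hfun (n : ℕ) : nuB hB hD n (hfun hB hD n) = 1 := by
  have hev : ∀ᶠ N in (atTop : Filter ℕ), Lam hB hD n N (hfun hB hD n) = 1/2 := by
    filter_upwards [eventually_gt_atTop n] with N hN
    unfold Lam
    rw [dif_pos hN]
    have hsum : ∑ s : Fin N → Bool, sgn (s ⟨n, hN⟩) * hfun hB hD n (ptS hB hD N s)
        = ∑ s : Fin N → Bool, (sgn (s ⟨n, hN⟩) + 1) / 2 := by
      refine Finset.sum_congr rfl fun s _ => ?_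
      rw [hfun_val hB hD hN s]
      cases hb : s ⟨n, hN⟩ <;> simp [hb, sgn] <;> ring
    rw [hsum]
    have : ∑ s : Fin N → Bool, (sgn (s ⟨n, hN⟩) + 1) / 2
        = ((∑ s : Fin N → Bool, sgn (s ⟨n, hN⟩)) + mcard N) / 2 := by
      rw [← Finset.sum_div, Finset.sum_add_distrib, Finset.sum_const, nsmul_eq_mul, mul_one]
      rfl
    rw [this, sum_sgn, zero_add]
    field_simp
    exact div_self (ne_of_gt (by nlinarith [mcard_pos N]))
  rw [nuB_apply, ulim_eq_of_eventually_const hev]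
  norm_num

lemma nuB_null (f : C(Y, ℝ)) : Tendsto (fun n => nuB hB hD n f) atTop (𝓝 0) := by
  set u : ℕ → ℝ := fun n => ulim (fun N => Lam hB hD n N f) with hu
  have step1 : ∀ k, ∑ n ∈ Finset.range k, (u n)^2 ≤ ‖f‖^2 := by
    intro k
    have level : ∀ N, k ≤ N →
        ∑ n ∈ Finset.range k, (Lam hB hD n N f)^2 ≤ ‖f‖^2 := by
      intro N hkN
      haveI : Nonempty (Fin N → Bool) := ⟨fun _ => false⟩
      set F : (Fin N → Bool) → ℝ := fun s => f (ptS hB hD N s) with hF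
      set E : ℕ → (Fin N → Bool) → ℝ :=
        fun i s => if h : i < N then sgn (s ⟨i, h⟩) else 0 with hE
      have orth : ∀ i ∈ Finset.range k, ∀ j ∈ Finset.range k,
          ∑ s : Fin N → Bool, E i s * E j s
            = if i = j then (Fintype.card (Fin N → Bool) : ℝ) else 0 := by
        intro i hi j hj
        have hiN : i < N := lt_of_lt_of_le (Finset.mem_range.1 hi) hkN
        have hjN : j < N := lt_of_lt_of_le (Finset.mem_range.1 hj) hkN
        simp only [hE, dif_pos hiN, dif_pos hjN]
        by_cases hij : i = j
        · subst hij
          rw [if_pos rfl]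
          have : ∀ s : Fin N → Bool, sgn (s ⟨i, hiN⟩) * sgn (s ⟨i, hjN⟩) = 1 :=
            fun s => sgn_mul_self _
          rw [Finset.sum_congr rfl (fun s _ => this s), Finset.sum_const, nsmul_eq_mul, mul_one,
            Finset.card_univ]
        · rw [if_neg hij]
          exact sum_sgn_mul _ _ (fun hc => hij (congrArg Fin.val hc))
      have B := bessel F E k orth
      have hEF : ∀ n ∈ Finset.range k,
          (∑ s : Fin N → Bool, E n s * F s) = mcard N * Lam hB hD n N f := by
        intro n hn
        have hnN : n < N := lt_of_lt_of_le (Finset.mem_range.1 hn) hkN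
        simp only [hE, dif_pos hnN]
        unfold Lam
        rw [dif_pos hnN, ← mul_assoc, mul_inv_cancel₀ (mcard_pos N).ne', one_mul]
      have hFb : ∑ s : Fin N → Bool, F s ^ 2 ≤ mcard N * ‖f‖^2 := by
        have : ∀ s : Fin N → Bool, F s ^ 2 ≤ ‖f‖^2 := by
          intro s
          rw [← sq_abs]
          have : |F s| ≤ ‖f‖ := by
            rw [← Real.norm_eq_abs]; exact f.norm_coe_le_norm _
          exact pow_le_pow_left₀ (abs_nonneg _) this 2
        calc ∑ s : Fin N → Bool, F s ^ 2 ≤ ∑ _s : Fin N → Bool, ‖f‖^2 :=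
              Finset.sum_le_sum fun s _ => this s
          _ = mcard N * ‖f‖^2 := by rw [Finset.sum_const, nsmul_eq_mul]; rfl
      have hmain : ∑ n ∈ Finset.range k, (mcard N * Lam hB hD n N f)^2
          ≤ mcard N * (mcard N * ‖f‖^2) := by
        calc ∑ n ∈ Finset.range k, (mcard N * Lam hB hD n N f)^2
            = ∑ n ∈ Finset.range k, (∑ s : Fin N → Bool, E n s * F s)^2 := by
              exact Finset.sum_congr rfl fun n hn => by rw [hEF n hn]
          _ ≤ (Fintype.card (Fin N → Bool) : ℝ) * ∑ s : Fin N → Bool, F s ^ 2 := B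
          _ ≤ mcard N * (mcard N * ‖f‖^2) := by
              refine mul_le_mul_of_nonneg_left hFb (mcard_pos N).le
      have hexp : ∑ n ∈ Finset.range k, (mcard N * Lam hB hD n N f)^2
          = mcard N ^ 2 * ∑ n ∈ Finset.range k, (Lam hB hD n N f)^2 := by
        rw [Finset.mul_sum]
        exact Finset.sum_congr rfl fun n _ => by ring
      rw [hexp] at hmain
      have hm2 : mcard N * (mcard N * ‖f‖^2) = mcard N ^2 * ‖f‖^2 := by ring
      rw [hm2] at hmain
      exact le_of_mul_le_mul_left hmain (pow_pos (mcard_pos N) 2)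
    have hG : Tendsto (fun N => ∑ n ∈ Finset.range k, (Lam hB hD n N f)^2)
        (UF : Filter ℕ) (𝓝 (∑ n ∈ Finset.range k, (u n)^2)) := by
      refine tendsto_finset_sum _ fun n _ => ?_
      exact (tendsto_ulim (fun N => Lam_abs_le hB hD n N f)).pow 2
    refine le_of_tendsto hG ?_
    exact UF_le (eventually_atTop.2 ⟨k, level⟩)
  have step2 : Summable (fun n => (u n)^2) :=
    summable_of_sum_range_le (fun n => sq_nonneg _) step1
  have step3 : Tendsto (fun n => (u n)^2) atTop (𝓝 0) := step2.tendsto_atTop_zero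
  have step4 : Tendsto (fun n => |u n|) atTop (𝓝 0) := by
    have hcomp := (Real.continuous_sqrt.tendsto 0).comp step3
    simp only [Function.comp_def, Real.sqrt_sq_eq_abs, Real.sqrt_zero] at hcomp
    exact hcomp
  have step5 : Tendsto u atTop (𝓝 0) :=
    (tendsto_zero_iff_abs_tendsto_zero u).2 step4
  have : Tendsto (fun n => 2 * u n) atTop (𝓝 (2 * 0)) := step5.const_mul 2
  simp only [mul_zero] at this
  exact this

/-- Josefson-Nissenzweig type data on an infinite compact Hausdorff space. -/
theorem exists_ydata (Y : Type*) [TopologicalSpace Y] [CompactSpace Y] [T2Space Y] [Infinite Y] :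
    ∃ (h : ℕ → C(Y, ℝ)) (yy : ℕ → Y) (ν : ℕ → (C(Y, ℝ) →L[ℝ] ℝ)),
      (∀ n y, h n y ∈ Icc (0:ℝ) 1) ∧ (∀ n, h n (yy n) = 1) ∧ (∀ n, ν n (h n) = 1) ∧
      (∀ n f, |ν n f| ≤ 2 * ‖f‖) ∧ (∀ f, Tendsto (fun n => ν n f) atTop (𝓝 0)) := by
  by_cases hB : ∀ y ∈ derivSet Y, AccPt y (𝓟 (derivSet Y))
  · have hD : (derivSet Y).Nonempty := by
      obtain ⟨w, hw⟩ := exists_accPt (S := (univ : Set Y)) infinite_univ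
      exact ⟨w, hw⟩
    refine ⟨hfun hB hD, fun n => ptS hB hD (n+1) (fun _ => false), nuB hB hD,
      fun n y => hfun_mem hB hD n y, ?_, nuB_hfun hB hD, nuB_abs_le hB hD, nuB_null hB hD⟩
    intro n
    have := hfun_val hB hD (Nat.lt_succ_self n) (fun _ : Fin (n+1) => false)
    simpa using this
  · push_neg at hB
    obtain ⟨x, hxD, hnacc⟩ := hB
    rw [accPt_iff_nhds] at hnacc
    push_neg at hnacc
    obtain ⟨W0, hW0, hW0p⟩ := hnacc
    obtain ⟨z, hznx, hconv⟩ := exists_convergent_seq hxD hW0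
      (fun y hy => hW0p y ⟨hy.1, hy.2⟩)
    have hsep : ∀ k, ∃ f : C(Y,ℝ), EqOn ⇑f 0 {x} ∧ EqOn ⇑f 1 {z k} ∧
        ∀ y, f y ∈ Icc (0:ℝ) 1 :=
      fun k => exists_continuous_zero_one_of_isClosed isClosed_singleton isClosed_singleton
        (Set.disjoint_singleton.mpr (Ne.symm (hznx k)))
    choose h h0 h1 hmem using hsep
    have e1 : ∀ k, h k (z k) = 1 := fun k => by simpa using h1 k rfl
    have e0 : ∀ k, h k x = 0 := fun k => by simpa using h0 k rfl
    refine ⟨h, z, fun k => evalCLM (z k) - evalCLM x, fun n y => hmem n y, e1, ?_, ?_, ?_⟩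
    · intro k
      simp [ContinuousLinearMap.sub_apply, e1 k, e0 k]
    · intro k f
      have b1 : |f (z k)| ≤ ‖f‖ := by
        rw [← Real.norm_eq_abs]; exact f.norm_coe_le_norm (z k)
      have b2 : |f x| ≤ ‖f‖ := by
        rw [← Real.norm_eq_abs]; exact f.norm_coe_le_norm x
      simp only [ContinuousLinearMap.sub_apply, evalCLM_apply]
      calc |f (z k) - f x| ≤ |f (z k)| + |f x| := abs_sub _ _
        _ ≤ 2 * ‖f‖ := by linarith
    · intro f
      have h2 : Tendsto (fun k => f (z k)) atTop (𝓝 (f x)) := (f.continuous.tendsto x).comp hconv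
      have h3 := h2.sub (tendsto_const_nhds (α := ℕ) (x := f x) (f := atTop))
      simp only [sub_self] at h3
      simpa [ContinuousLinearMap.sub_apply] using h3

section Main
variable {X Y : Type*} [TopologicalSpace X] [TopologicalSpace Y]
  [CompactSpace X] [CompactSpace Y] [T2Space X] [T2Space Y]

/-- curry at a point, as a continuous linear map -/
noncomputable def curryAt (x : X) : C(X × Y, ℝ) →L[ℝ] C(Y, ℝ) :=
  LinearMap.mkContinuous
    { toFun := fun f => f.curry x
      map_add' := fun f g => ContinuousMap.ext fun y => rfl
      map_smul' := fun c f => ContinuousMap.ext fun y => rfl } 1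
    (fun f => by
      rw [one_mul]
      refine (ContinuousMap.norm_le _ (norm_nonneg f)).2 (fun y => ?_)
      exact f.norm_coe_le_norm (x, y))

@[simp] lemma curryAt_apply (x : X) (f : C(X × Y, ℝ)) (y : Y) :
    curryAt x f y = f (x, y) := rfl

variable [Infinite X] [Infinite Y]

set_option maxHeartbeats 1000000 in
theorem main_aux :
    ∃ (φ : ℕ → C(X × Y, ℝ)) (T : ZeroAtInftyContinuousMap ℕ ℝ →ₗᵢ[ℝ] C(X × Y, ℝ))
      (P : C(X × Y, ℝ) →L[ℝ] C(X × Y, ℝ)),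
      (∀ n z, 0 ≤ φ n z) ∧
      (∀ n m, n ≠ m → Disjoint (Function.support ⇑(φ n)) (Function.support ⇑(φ m))) ∧
      (∀ n, ‖φ n‖ = 1) ∧
      (∀ n, T (stdUnitVec n) = φ n) ∧
      P ∘L P = P ∧ Set.range ⇑P = Set.range ⇑T := by
  classical
  obtain ⟨x, g, hg01, hgx, hgx0, hgsupp⟩ := exists_bumps X
  obtain ⟨h, yy, ν, hh01, hhyy, hνh, hνb, hνnull⟩ := exists_ydata Y
  -- the disjointly supported bump functions on the product
  set φ : ℕ → C(X × Y, ℝ) := fun n =>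
    ((g n).comp ⟨Prod.fst, continuous_fst⟩) * ((h n).comp ⟨Prod.snd, continuous_snd⟩) with hφ
  have φ_apply : ∀ n z, φ n z = g n z.1 * h n z.2 := fun n z => rfl
  have φ_nonneg : ∀ n z, 0 ≤ φ n z := fun n z =>
    mul_nonneg (hg01 n z.1).1 (hh01 n z.2).1
  have φ_le_one : ∀ n z, φ n z ≤ 1 := fun n z => by
    rw [φ_apply]
    exact mul_le_one₀ (hg01 n z.1).2 (hh01 n z.2).1 (hh01 n z.2).2
  have φ_supp : ∀ n z, φ n z ≠ 0 → z.1 ∈ support ⇑(g n) := by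
    intro n z hz
    rw [φ_apply] at hz
    intro h0
    exact hz (by rw [h0, zero_mul])
  have φ_disj : ∀ n m, n ≠ m → Disjoint (support ⇑(φ n)) (support ⇑(φ m)) := by
    intro n m hnm
    rw [Set.disjoint_left]
    intro z hz1 hz2
    exact Set.disjoint_left.1 (hgsupp n m hnm) (φ_supp n z hz1) (φ_supp m z hz2)
  set w : ℕ → X × Y := fun n => (x n, yy n) with hw
  have φ_at_w : ∀ n, φ n (w n) = 1 := fun n => by
    rw [φ_apply]
    show g n (x n) * h n (yy n) = 1
    rw [hgx n, hhyy n, one_mul]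
  have φ_at_w' : ∀ n m, m ≠ n → φ m (w n) = 0 := fun n m hmn => by
    rw [φ_apply]
    show g m (x n) * h m (yy n) = 0
    rw [hgx0 n m (fun e => hmn e.symm), zero_mul]
  have φ_norm : ∀ n, ‖φ n‖ = 1 := by
    intro n
    apply le_antisymm
    · refine (ContinuousMap.norm_le _ zero_le_one).2 (fun z => ?_)
      rw [Real.norm_eq_abs, abs_of_nonneg (φ_nonneg n z)]
      exact φ_le_one n z
    · have h1 := (φ n).norm_coe_le_norm (w n)
      rw [φ_at_w n] at h1
      simpa using h1
  -- pointwise bound on finite sums with disjointly supported bumps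
  have sum_bound : ∀ (t : Finset ℕ) (c : ℕ → ℝ) (B : ℝ), 0 ≤ B → (∀ m ∈ t, |c m| ≤ B) →
      ∀ z, |∑ m ∈ t, c m * φ m z| ≤ B := by
    intro t c B hB hc z
    have h4 : ∑ m ∈ t, φ m z ≤ 1 := by
      by_cases hex : ∃ m₀ ∈ t, φ m₀ z ≠ 0
      · obtain ⟨m₀, hm₀t, hm₀⟩ := hex
        have heq : ∑ m ∈ t, φ m z = φ m₀ z := by
          refine Finset.sum_eq_single_of_mem m₀ hm₀t fun m hm hne => ?_
          by_contra hc0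
          exact Set.disjoint_left.1 (φ_disj m m₀ hne) hc0 hm₀
        rw [heq]; exact φ_le_one _ _
      · push_neg at hex
        rw [Finset.sum_eq_zero hex]
        exact zero_le_one
    have h1 : |∑ m ∈ t, c m * φ m z| ≤ ∑ m ∈ t, |c m| * φ m z := by
      refine (Finset.abs_sum_le_sum_abs _ _).trans ?_
      refine le_of_eq (Finset.sum_congr rfl fun m _ => ?_)
      rw [abs_mul, abs_of_nonneg (φ_nonneg m z)]
    have h2 : ∑ m ∈ t, |c m| * φ m z ≤ ∑ m ∈ t, B * φ m z :=
      Finset.sum_le_sum fun m hm => mul_le_mul_of_nonneg_right (hc m hm) (φ_nonneg m z)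
    calc |∑ m ∈ t, c m * φ m z| ≤ ∑ m ∈ t, B * φ m z := h1.trans h2
      _ = B * ∑ m ∈ t, φ m z := (Finset.mul_sum _ _ _).symm
      _ ≤ B * 1 := mul_le_mul_of_nonneg_left h4 hB
      _ = B := mul_one B
  -- evaluation of finite sums
  have eval_sum : ∀ (t : Finset ℕ) (c : ℕ → ℝ) (z : X × Y),
      (∑ m ∈ t, c m • φ m) z = ∑ m ∈ t, c m * φ m z := by
    intro t c z
    have : (∑ m ∈ t, c m • φ m) z = (evalCLM z) (∑ m ∈ t, c m • φ m) := rfl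
    rw [this, map_sum]
    exact Finset.sum_congr rfl fun m _ => by
      rw [map_smul]; simp [evalCLM_apply]
  -- summability
  have hsummable : ∀ (a : ℕ → ℝ), Tendsto a atTop (𝓝 0) → Summable (fun m => a m • φ m) := by
    intro a ha
    rw [summable_iff_vanishing]
    intro e he
    obtain ⟨ε, hε, hball⟩ := Metric.mem_nhds_iff.1 he
    have hev : ∀ᶠ m in atTop, |a m| < ε/2 := by
      have := Metric.tendsto_atTop.1 ha (ε/2) (by linarith)
      obtain ⟨N, hN⟩ := this
      exact eventually_atTop.2 ⟨N, fun m hm => by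
        have := hN m hm
        rwa [Real.dist_eq, sub_zero] at this⟩
    obtain ⟨N, hN⟩ := eventually_atTop.1 hev
    refine ⟨Finset.range N, fun t ht => ?_⟩
    apply hball
    rw [Metric.mem_ball, dist_zero_right]
    have hnorm : ‖∑ m ∈ t, a m • φ m‖ ≤ ε/2 := by
      refine (ContinuousMap.norm_le _ (by linarith)).2 fun z => ?_
      rw [Real.norm_eq_abs, eval_sum]
      refine sum_bound t a (ε/2) (by linarith) (fun m hm => ?_) z
      have hmN : N ≤ m := by
        by_contra hlt
        push_neg at hlt
        exact (Finset.disjoint_left.1 ht hm) (Finset.mem_range.2 hlt)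
      exact (hN m hmN).le
    linarith
  have hsum : ∀ a : ZeroAtInftyContinuousMap ℕ ℝ, Summable (fun m => a m • φ m) :=
    fun a => hsummable _ (c0_tendsto a)
  -- the operator T
  set Tfun : ZeroAtInftyContinuousMap ℕ ℝ → C(X × Y, ℝ) := fun a => ∑' m, (a m) • φ m with hT
  have eval_tsum : ∀ (a : ZeroAtInftyContinuousMap ℕ ℝ) (z : X × Y),
      Tfun a z = ∑' m, a m * φ m z := by
    intro a z
    have h1 : Tfun a z = (evalCLM z) (∑' m, a m • φ m) := rfl
    rw [h1, ContinuousLinearMap.map_tsum _ (hsum a)]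
    exact tsum_congr fun m => by rw [map_smul]; simp [evalCLM_apply]
  have tsum_pt : ∀ (c : ℕ → ℝ) (z : X × Y) (B : ℝ), 0 ≤ B → (∀ m, |c m| ≤ B) →
      |∑' m, c m * φ m z| ≤ B := by
    intro c z B hB hc
    by_cases hex : ∃ m₀, c m₀ * φ m₀ z ≠ 0
    · obtain ⟨m₀, hm₀⟩ := hex
      have hφm₀ : φ m₀ z ≠ 0 := fun h0 => hm₀ (by rw [h0, mul_zero])
      have heq : ∑' m, c m * φ m z = c m₀ * φ m₀ z := by
        refine tsum_eq_single m₀ fun m hm => ?_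
        by_cases hφm : φ m z = 0
        · rw [hφm, mul_zero]
        · exact absurd hφm₀ (fun _ =>
            Set.disjoint_left.1 (φ_disj m m₀ hm) hφm hφm₀)
      rw [heq, abs_mul]
      have hb1 : |φ m₀ z| ≤ 1 := by
        rw [abs_of_nonneg (φ_nonneg m₀ z)]; exact φ_le_one m₀ z
      calc |c m₀| * |φ m₀ z| ≤ B * 1 :=
            mul_le_mul (hc m₀) hb1 (abs_nonneg _) hB
        _ = B := mul_one B
    · push_neg at hex
      have : (fun m => c m * φ m z) = fun _ => 0 := funext hex
      rw [this, tsum_zero]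
      simpa using hB
  have Tnorm : ∀ a, ‖Tfun a‖ = ‖a‖ := by
    intro a
    apply le_antisymm
    · refine (ContinuousMap.norm_le _ (norm_nonneg a)).2 fun z => ?_
      rw [Real.norm_eq_abs, eval_tsum]
      exact tsum_pt _ z ‖a‖ (norm_nonneg a) (c0_apply_le_norm a)
    · refine c0_norm_le a (norm_nonneg _) fun n => ?_
      have hwn : Tfun a (w n) = a n := by
        rw [eval_tsum]
        rw [tsum_eq_single n (fun m hm => by rw [φ_at_w' n m hm, mul_zero])]
        rw [φ_at_w n, mul_one]
      calc |a n| = |Tfun a (w n)| := by rw [hwn]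
        _ ≤ ‖Tfun a‖ := by
            rw [← Real.norm_eq_abs]; exact (Tfun a).norm_coe_le_norm _
  have Tadd : ∀ a b, Tfun (a + b) = Tfun a + Tfun b := by
    intro a b
    have h1 : ∀ m, ((a + b) m) • φ m = a m • φ m + b m • φ m := fun m => by
      have : (a + b) m = a m + b m := rfl
      rw [this, add_smul]
    calc Tfun (a + b) = ∑' m, (a m • φ m + b m • φ m) := tsum_congr h1
      _ = _ := Summable.tsum_add (hsum a) (hsum b)
  have Tsmul : ∀ (r : ℝ) a, Tfun (r • a) = r • Tfun a := by
    intro r a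
    have h1 : ∀ m, ((r • a) m) • φ m = r • (a m • φ m) := fun m => by
      have : (r • a) m = r * a m := rfl
      rw [this, mul_smul]
    calc Tfun (r • a) = ∑' m, r • (a m • φ m) := tsum_congr h1
      _ = r • Tfun a := Summable.tsum_const_smul r (hsum a)
  set T : ZeroAtInftyContinuousMap ℕ ℝ →ₗᵢ[ℝ] C(X × Y, ℝ) :=
    ⟨{ toFun := Tfun, map_add' := Tadd, map_smul' := Tsmul }, Tnorm⟩ with hTdef
  have T_coe : ∀ a, T a = Tfun a := fun a => rfl
  have T_std : ∀ n, T (stdUnitVec n) = φ n := by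
    intro n
    rw [T_coe]
    have hv : ∀ m, (stdUnitVec n) m = (Pi.single n (1:ℝ) : ℕ → ℝ) m := fun m => rfl
    rw [show Tfun (stdUnitVec n) = ∑' m, ((stdUnitVec n) m) • φ m from rfl]
    rw [tsum_eq_single n (fun m hm => by rw [hv m, Pi.single_eq_of_ne hm, zero_smul])]
    rw [hv n, Pi.single_eq_same, one_smul]
  -- the coefficient functionals
  set μ : ℕ → (C(X × Y, ℝ) →L[ℝ] ℝ) := fun n => (ν n).comp (curryAt (x n)) with hμ
  have μ_apply : ∀ n f, μ n f = ν n ((curryAt (x n)) f) := fun n f => rfl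
  have curry_phi : ∀ n m, (curryAt (x n)) (φ m) = (g m (x n)) • h m := by
    intro n m
    ext y
    show φ m (x n, y) = (g m (x n)) • h m y
    rw [φ_apply, smul_eq_mul]
  have μφ_same : ∀ n, μ n (φ n) = 1 := fun n => by
    rw [μ_apply, curry_phi n n, hgx n, one_smul]
    exact hνh n
  have μφ_ne : ∀ n m, m ≠ n → μ n (φ m) = 0 := fun n m hmn => by
    rw [μ_apply, curry_phi n m, hgx0 n m (fun e => hmn e.symm), zero_smul, map_zero]
  have μ_bound : ∀ n f, |μ n f| ≤ 2 * ‖f‖ := by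
    intro n f
    rw [μ_apply]
    refine (hνb n _).trans ?_
    have hcur : ‖(curryAt (x n)) f‖ ≤ ‖f‖ := by
      refine (ContinuousMap.norm_le _ (norm_nonneg f)).2 fun y => ?_
      exact f.norm_coe_le_norm (x n, y)
    linarith
  have μ_null : ∀ f, Tendsto (fun n => μ n f) atTop (𝓝 0) := by
    intro f
    rw [NormedAddCommGroup.tendsto_nhds_zero]
    intro ε hε
    set K : Set C(Y, ℝ) := Set.range (⇑f.curry) with hK
    have hKc : IsCompact K := isCompact_range (map_continuous f.curry)
    obtain ⟨S, hSfin, hScov⟩ := (Metric.totallyBounded_iff).1 hKc.totallyBounded (ε/6)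
      (by linarith)
    have hev : ∀ᶠ n in atTop, ∀ gg ∈ S, |ν n gg| < ε/6 := by
      rw [hSfin.eventually_all]
      intro gg _
      have := NormedAddCommGroup.tendsto_nhds_zero.1 (hνnull gg) (ε/6) (by linarith)
      exact this.mono fun n hn => by rwa [Real.norm_eq_abs] at hn
    filter_upwards [hev] with n hn
    have hmem : (curryAt (x n)) f ∈ K := ⟨x n, by ext y; simp [ContinuousMap.curry_apply]⟩
    obtain ⟨gg, hggS, hggball⟩ := Set.mem_iUnion₂.1 (hScov hmem)
    have hdist : ‖(curryAt (x n)) f - gg‖ < ε/6 := by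
      have := Metric.mem_ball.1 hggball
      rwa [dist_eq_norm] at this
    rw [Real.norm_eq_abs]
    have harg : (curryAt (x n)) f = ((curryAt (x n)) f - gg) + gg := by ring
    calc |μ n f| = |ν n (((curryAt (x n)) f - gg) + gg)| := by rw [μ_apply, ← harg]
      _ = |ν n ((curryAt (x n)) f - gg) + ν n gg| := by rw [map_add]
      _ ≤ |ν n ((curryAt (x n)) f - gg)| + |ν n gg| := abs_add_le _ _
      _ ≤ 2 * ‖(curryAt (x n)) f - gg‖ + |ν n gg| := by
          linarith [hνb n ((curryAt (x n)) f - gg)]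
      _ < 2 * (ε/6) + ε/6 := by
          have h1 : 2 * ‖(curryAt (x n)) f - gg‖ ≤ 2 * (ε/6) := by linarith
          have h2 := hn gg hggS
          -- strict: combine
          nlinarith [hdist, h2]
      _ < ε := by linarith
  -- the map into c₀
  set κ : C(X × Y, ℝ) → ZeroAtInftyContinuousMap ℕ ℝ :=
    fun f => mkC0 (fun n => μ n f) (μ_null f) with hκ
  have κ_apply : ∀ f n, κ f n = μ n f := fun f n => rfl
  have κT : ∀ a, κ (Tfun a) = a := by
    intro a
    apply DFunLike.ext
    intro n
    rw [κ_apply]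
    have h1 : μ n (Tfun a) = ∑' m, μ n (a m • φ m) :=
      ContinuousLinearMap.map_tsum _ (hsum a)
    rw [h1, tsum_eq_single n (fun m hm => by
      rw [map_smul, μφ_ne n m hm, smul_zero])]
    rw [map_smul, μφ_same n, smul_eq_mul, mul_one]
  set κL : C(X × Y, ℝ) →L[ℝ] ZeroAtInftyContinuousMap ℕ ℝ :=
    LinearMap.mkContinuous
      { toFun := κ
        map_add' := fun f f' => by
          apply DFunLike.ext
          intro n
          have : (κ f + κ f') n = κ f n + κ f' n := rfl
          rw [this, κ_apply, κ_apply, κ_apply, map_add]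
        map_smul' := fun r f => by
          apply DFunLike.ext
          intro n
          have : ((r • κ f)) n = r * κ f n := rfl
          rw [RingHom.id_apply, this, κ_apply, κ_apply, map_smul, smul_eq_mul]} 2
      (fun f => by
        show ‖κ f‖ ≤ 2 * ‖f‖
        refine c0_norm_le _ (by positivity) fun n => ?_
        rw [κ_apply]
        exact μ_bound n f) with hκL
  have κL_coe : ∀ f, κL f = κ f := fun f => rfl
  set P : C(X × Y, ℝ) →L[ℝ] C(X × Y, ℝ) := (T.toContinuousLinearMap).comp κL with hP
  have P_applyv : ∀ f, P f = Tfun (κ f) := fun f => rfl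
  refine ⟨φ, T, P, φ_nonneg, φ_disj, φ_norm, T_std, ?_, ?_⟩
  · apply ContinuousLinearMap.ext
    intro f
    show P (P f) = P f
    rw [P_applyv f, P_applyv, κT (κ f)]
  · apply Set.eq_of_subset_of_subset
    · rintro q ⟨f, rfl⟩
      exact ⟨κ f, rfl⟩
    · rintro q ⟨a, rfl⟩
      exact ⟨Tfun a, by rw [P_applyv, κT, T_coe]⟩

end Main
end Stmt18

theorem stmt_18 {X Y : Type*} [TopologicalSpace X] [TopologicalSpace Y]
    [CompactSpace X] [CompactSpace Y] [T2Space X] [T2Space Y]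
    [Infinite X] [Infinite Y] :
    ∃ (φ : ℕ → C(X × Y, ℝ)) (T : ZeroAtInftyContinuousMap ℕ ℝ →ₗᵢ[ℝ] C(X × Y, ℝ))
      (P : C(X × Y, ℝ) →L[ℝ] C(X × Y, ℝ)),
      (∀ n z, 0 ≤ φ n z) ∧
      (∀ n m, n ≠ m → Disjoint (Function.support ⇑(φ n)) (Function.support ⇑(φ m))) ∧
      (∀ n, ‖φ n‖ = 1) ∧
      (∀ n, T (stdUnitVec n) = φ n) ∧
      P ∘L P = P ∧ Set.range ⇑P = Set.range ⇑T := by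
  exact Stmt18.main_aux
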